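/- arXiv:2512.10022 — 2 statements merged into one kernel-verified Lean document; each statement's English description precedes it below -/
import Mathlib

section
/- For any element e of a matroid M, at least one of the following holds: no tangle of K(M) splits in K(M \ e), or no tangle of K(M) splits in K(M / e). That is, e can be removed by deletion or contraction in such a way that no tangle splits. -/
open Set

variable {α : Type*} {V : Type*}

/-- An (unbundled) connectivity-system candidate: a ground set together with a
connectivity function on its subsets. -/
structure PreSys (α : Type*) where
  E : Set α
  lam : Set α → ℕ

/-- `K` is a connectivity system: the ground set is finite and the connectivity
function is symmetric and submodular on subsets of the ground set. -/
def PreSys.IsConnSys (K : PreSys α) : Prop :=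
  K.E.Finite ∧
  (∀ X ⊆ K.E, K.lam X = K.lam (K.E \ X)) ∧
  (∀ X ⊆ K.E, ∀ Y ⊆ K.E, K.lam (X ∩ Y) + K.lam (X ∪ Y) ≤ K.lam X + K.lam Y)

/-- A tangle of order `k` in a connectivity system. -/
def IsTangle (K : PreSys α) (k : ℕ) (T : Set (Set α)) : Prop :=
  (∀ A ∈ T, A ⊆ K.E ∧ K.lam A < k) ∧
  (∀ A ⊆ K.E, K.lam A < k → (A ∈ T ↔ (K.E \ A) ∉ T)) ∧
  (∀ A ∈ T, ∀ B ∈ T, ∀ C ∈ T, A ∪ B ∪ C ≠ K.E) ∧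
  (∀ A ∈ T, A.ncard ≠ K.E.ncard - 1)

/-- `K` dominates `K₀`. -/
def Dominates (K K₀ : PreSys α) : Prop :=
  K₀.E ⊆ K.E ∧ ∀ X ⊆ K₀.E, K₀.lam X ≤ K.lam X

/-- The collection of subsets of `K.E` of `K`-connectivity `< k` whose trace on
`K₀.E` lies in `T₀`; when `K` dominates `K₀` and `T₀` is a tangle, this is the
tangle induced by `T₀` in `K`. -/
def InducedTangle (K K₀ : PreSys α) (k : ℕ) (T₀ : Set (Set α)) : Set (Set α) :=
  {X | X ⊆ K.E ∧ K.lam X < k ∧ X ∩ K₀.E ∈ T₀}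

/-- `K₀` adheres to `K`. -/
def Adheres (K₀ K : PreSys α) : Prop :=
  Dominates K K₀ ∧
  ∀ A B : Set α, A ∪ B = K₀.E → Disjoint A B →
    ∃ X₁ X₂ : Set α, Disjoint X₁ X₂ ∧ (X₁ ∪ X₂ = A ∨ X₁ ∪ X₂ = B) ∧
      K.lam X₁ ≤ K₀.lam A ∧ K.lam X₂ ≤ K₀.lam A

/-- The tangle `T` of order `k` in `K` splits in `K₀`: two distinct tangles of
order `k` in `K₀` both induce `T`. -/
def Splits (K K₀ : PreSys α) (k : ℕ) (T : Set (Set α)) : Prop :=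
  ∃ T₁ T₂ : Set (Set α), T₁ ≠ T₂ ∧ IsTangle K₀ k T₁ ∧ IsTangle K₀ k T₂ ∧
    InducedTangle K K₀ k T₁ = T ∧ InducedTangle K K₀ k T₂ = T

/-- `K` is `k`-entangled: for each `t ≤ k` there is at most one tangle of order `t`. -/
def Entangled (K : PreSys α) (k : ℕ) : Prop :=
  ∀ t ≤ k, ∀ T₁ T₂ : Set (Set α), IsTangle K t T₁ → IsTangle K t T₂ → T₁ = T₂

/-! ### Matroids -/

/-- The rank of a set in a matroid: the largest cardinality of an independent
subset of `X`. -/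
noncomputable def mrank (M : Matroid α) (X : Set α) : ℕ :=
  sSup {n | ∃ I, M.Indep I ∧ I ⊆ X ∧ I.ncard = n}

/-- The connectivity function `λ_M(X) = r(X) + r(E \ X) - r(M) + 1` of a matroid. -/
noncomputable def lamM (M : Matroid α) (X : Set α) : ℕ :=
  mrank M X + mrank M (M.E \ X) - mrank M M.E + 1

/-- The connectivity function of the deletion `M \ e`, expressed via the rank
function of `M` (for `X ⊆ E(M) \ {e}` one has `r_{M\e}(X) = r_M(X)`). -/
noncomputable def lamDel (M : Matroid α) (e : α) (X : Set α) : ℕ :=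
  mrank M X + mrank M ((M.E \ {e}) \ X) - mrank M (M.E \ {e}) + 1

/-- The connectivity function of the contraction `M / e`, expressed via the rank
function of `M` (for `Y ⊆ E(M) \ {e}` one has `r_{M/e}(Y) = r_M(Y ∪ {e}) - r_M({e})`,
and `r(M/e) = r(M) - r_M({e})`). -/
noncomputable def lamCon (M : Matroid α) (e : α) (X : Set α) : ℕ :=
  mrank M (X ∪ {e}) + mrank M (((M.E \ {e}) \ X) ∪ {e}) - mrank M {e} - mrank M M.E + 1

/-- The connectivity system `K(M)` of a matroid `M`. -/
noncomputable def KM (M : Matroid α) : PreSys α := ⟨M.E, lamM M⟩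

/-- The connectivity system `K(M \ e)`. -/
noncomputable def KDel (M : Matroid α) (e : α) : PreSys α := ⟨M.E \ {e}, lamDel M e⟩

/-- The connectivity system `K(M / e)`. -/
noncomputable def KCon (M : Matroid α) (e : α) : PreSys α := ⟨M.E \ {e}, lamCon M e⟩

/-! ### Graphs, cut-rank and pivoting -/

/-- The cut-rank, relative to a ground set `S` of vertices, of a set `X`:
the GF(2)-rank of the adjacency submatrix with rows `X ∩ S` and columns `S \ X`.
For an induced subgraph of `G` on `S` this is its cut-rank function. -/
noncomputable def cutRankOn (G : SimpleGraph V) [Fintype V] (S X : Set V) : ℕ :=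
  letI : Fintype ↥(X ∩ S) := (Set.toFinite _).fintype
  letI : Fintype ↥(S \ X) := (Set.toFinite _).fintype
  letI : DecidableRel G.Adj := Classical.decRel _
  Matrix.rank (Matrix.of fun (a : ↥(X ∩ S)) (b : ↥(S \ X)) =>
    if G.Adj a.1 b.1 then (1 : ZMod 2) else 0)

/-- The cut-rank function `ρ_G` of a graph `G`. -/
noncomputable def cutRank (G : SimpleGraph V) [Fintype V] (X : Set V) : ℕ :=
  cutRankOn G Set.univ X

/-- Local complementation at a vertex `v`: adjacency among the neighbours of `v`
is complemented. -/
def localComp (G : SimpleGraph V) (v : V) : SimpleGraph V where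
  Adj a b := a ≠ b ∧
    ((G.Adj v a ∧ G.Adj v b ∧ ¬ G.Adj a b) ∨ (¬ (G.Adj v a ∧ G.Adj v b) ∧ G.Adj a b))
  symm := by
    constructor
    intro a b h
    obtain ⟨hab, h⟩ := h
    refine ⟨hab.symm, ?_⟩
    rcases h with ⟨h1, h2, h3⟩ | ⟨h1, h2⟩
    · exact Or.inl ⟨h2, h1, fun h => h3 h.symm⟩
    · exact Or.inr ⟨fun h => h1 ⟨h.2, h.1⟩, h2.symm⟩
  loopless := ⟨fun a h => h.1 rfl⟩

/-- The pivot `G × e` on an edge `e = uv`, defined as `G * u * v * u` where `*`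
denotes local complementation. -/
def pivot (G : SimpleGraph V) (u v : V) : SimpleGraph V :=
  localComp (localComp (localComp G u) v) u

/-- The connectivity system `CR(G) = (V(G), ρ_G)`. -/
noncomputable def CR (G : SimpleGraph V) [Fintype V] : PreSys V :=
  ⟨Set.univ, cutRank G⟩

/-- The connectivity system `CR(G - v)` of the graph obtained by deleting the
vertex `v`: ground set `V \ {v}` with the cut-rank computed inside `V \ {v}`. -/
noncomputable def CRdel (G : SimpleGraph V) [Fintype V] (v : V) : PreSys V :=
  ⟨{v}ᶜ, cutRankOn G {v}ᶜ⟩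

/-! ### Partial branch-decompositions -/

/-- A partial branch-decomposition of a connectivity system `K`: a cubic tree
(each vertex of degree 1 or 3) together with a map from the ground set to the
leaves of the tree. -/
structure PBD (K : PreSys α) (V : Type*) where
  tree : SimpleGraph V
  isTree : tree.IsTree
  cubic : ∀ x : V, (tree.neighborSet x).ncard = 1 ∨ (tree.neighborSet x).ncard = 3
  f : α → V
  maps : ∀ a ∈ K.E, (tree.neighborSet (f a)).ncard = 1

/-- A leaf of the cubic tree of a partial branch-decomposition. -/
def PBD.IsLeaf {K : PreSys α} (D : PBD K V) (x : V) : Prop :=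
  (D.tree.neighborSet x).ncard = 1

/-- The side of the edge `uw` of the tree `tr` towards `u`: the elements of the
ground set mapped by `f` into the component of `tr - uw` containing `u`. -/
def edgeSide (K : PreSys α) (tr : SimpleGraph V) (f : α → V) (u w : V) : Set α :=
  {a | a ∈ K.E ∧ (tr.deleteEdges {s(u, w)}).Reachable (f a) u}

/-- The partial branch-decomposition data `(tr, f)` has width at most `t`:
every edge of the tree induces a partition whose sides have connectivity at most `t`. -/
def widthLE (K : PreSys α) (tr : SimpleGraph V) (f : α → V) (t : ℕ) : Prop :=
  ∀ u w : V, tr.Adj u w → K.lam (edgeSide K tr f u w) ≤ t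

/-- The set displayed by the vertex `x`: the elements of the ground set mapped to `x`. -/
def display (K : PreSys α) (f : α → V) (x : V) : Set α :=
  {a | a ∈ K.E ∧ f a = x}

/-- `X` is weakly `t`-branched: `λ(X) ≤ t` and there is a partial
branch-decomposition of width at most `t` in which every leaf displays a subset
of `E \ X` or a singleton. -/
def WeaklyBranched (K : PreSys α) (X : Set α) (t : ℕ) : Prop :=
  K.lam X ≤ t ∧
    ∃ (V : Type) (_ : Fintype V) (D : PBD K V), widthLE K D.tree D.f t ∧
      ∀ x : V, D.IsLeaf x →
        (display K D.f x ⊆ K.E \ X ∨ ∃ a : α, display K D.f x = {a})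

/-- `X` is `t`-branched: there is a partial branch-decomposition of width at most
`t` in which some leaf displays `E \ X` and every other leaf displays at most one
element of `X`. -/
def Branched (K : PreSys α) (X : Set α) (t : ℕ) : Prop :=
  ∃ (V : Type) (_ : Fintype V) (D : PBD K V), widthLE K D.tree D.f t ∧
    ∃ r : V, D.IsLeaf r ∧ display K D.f r = K.E \ X ∧
      ∀ x : V, D.IsLeaf x → x ≠ r → (display K D.f x ∩ X).ncard ≤ 1

/-- `κ_K(X, Y)`: the minimum connectivity of a set `Z` with `X ⊆ Z ⊆ E \ Y`. -/
noncomputable def kappa (K : PreSys α) (X Y : Set α) : ℕ :=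
  sInf {n | ∃ Z : Set α, X ⊆ Z ∧ Z ⊆ K.E \ Y ∧ K.lam Z = n}

/-! Suppose a tangle of order `k` splits in `K(M \ e)` into `D₁ ≠ D₂` and a tangle of order `k'`
splits in `K(M / e)` into `C₁ ≠ C₂`. With `E₀ = E(M) \ {e}`, pick `A ∈ D₁` with `E₀ \ A ∈ D₂` and
`B ∈ C₁` with `E₀ \ B ∈ C₂`. Since `D₁` and `D₂` induce the same tangle of `K(M)`, every subset of
`A` of `λ_M`-connectivity `< k` lies in `D₂` too; as no three sets of `D₂` cover `E₀`, one of the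
corners `A ∩ B`, `A \ B` has `λ_M ≥ k`. The same holds for `E₀ \ A`, and, with `k'`, for `B` and
`E₀ \ B`. On the other hand submodularity of the rank gives
`λ_M(X ∩ Y) + λ_M(E₀ \ (X ∪ Y)) ≤ λ_{M\e}(X) + λ_{M/e}(Y) + 1`, so both pairs of opposite corners
have total connectivity `< k + k'`, and these constraints are incompatible. -/

section Rank

variable {α : Type*} {M : Matroid α} [M.Finite] {X Y I : Set α}

lemma Matroid.IsBasis'.mrank_eq (hI : M.IsBasis' I X) : mrank M X = I.ncard := by
  refine IsGreatest.csSup_eq ⟨⟨I, hI.indep, hI.subset, rfl⟩, ?_⟩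
  rintro _ ⟨J, hJ, hJX, rfl⟩
  have hJI : J.encard ≤ I.encard := hI.encard_eq_eRk ▸ hJ.encard_le_eRk_of_subset hJX
  exact ENat.toNat_le_toNat hJI hI.indep.finite.encard_lt_top.ne

variable (M X) in
lemma cast_mrank : (mrank M X : ℕ∞) = M.eRk X := by
  obtain ⟨I, hI⟩ := M.exists_isBasis' X
  rw [hI.mrank_eq, hI.indep.finite.cast_ncard_eq, hI.encard_eq_eRk]

lemma mrank_mono (h : X ⊆ Y) : mrank M X ≤ mrank M Y := by
  have := M.eRk_mono h
  rwa [← cast_mrank, ← cast_mrank, Nat.cast_le] at this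

variable (M X Y)

lemma mrank_inter_add_mrank_union_le :
    mrank M (X ∩ Y) + mrank M (X ∪ Y) ≤ mrank M X + mrank M Y := by
  have := M.eRk_inter_add_eRk_union_le X Y
  rwa [← cast_mrank, ← cast_mrank, ← cast_mrank, ← cast_mrank, ← Nat.cast_add, ← Nat.cast_add,
    Nat.cast_le] at this

lemma mrank_union_le_mrank_add_mrank : mrank M (X ∪ Y) ≤ mrank M X + mrank M Y :=
  le_of_add_le_right (mrank_inter_add_mrank_union_le M X Y)

lemma mrank_ground_le_mrank_add_mrank_diff : mrank M M.E ≤ mrank M X + mrank M (M.E \ X) :=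
  (mrank_mono (sdiff_subset_iff.1 subset_rfl)).trans (mrank_union_le_mrank_add_mrank M X _)

lemma mrank_singleton_le (e : α) : mrank M {e} ≤ 1 := by
  have := M.eRk_singleton_le e
  rwa [← cast_mrank, Nat.cast_le_one] at this

end Rank

section Connectivity

variable {α : Type*} {M : Matroid α} {X Y : Set α} {e : α}

lemma lamM_ground_diff (hX : X ⊆ M.E) : lamM M (M.E \ X) = lamM M X := by
  rw [lamM, lamM, sdiff_sdiff_cancel_left hX, Nat.add_comm (mrank M (M.E \ X))]

variable [M.Finite]

lemma lamDel_le_lamM (hX : X ⊆ M.E \ {e}) : lamDel M e X ≤ lamM M X := by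
  have hXe : X ∩ {e} = ∅ := by
    rw [inter_singleton_eq_empty]
    exact fun heX ↦ (hX heX).2 rfl
  have hsub := mrank_inter_add_mrank_union_le M (M.E \ X) (M.E \ {e})
  rw [← sdiff_inter, hXe, sdiff_empty, sdiff_inter_sdiff, union_comm, ← sdiff_sdiff] at hsub
  unfold lamDel lamM
  omega

lemma lamCon_le_lamM (he : e ∈ M.E) (hX : X ⊆ M.E \ {e}) : lamCon M e X ≤ lamM M X := by
  have hcompl : (M.E \ {e}) \ X ∪ {e} = M.E \ X := by
    rw [sdiff_sdiff_comm, sdiff_union_self, union_eq_left, singleton_subset_iff]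
    exact ⟨he, fun heX ↦ (hX heX).2 rfl⟩
  have := mrank_union_le_mrank_add_mrank M X {e}
  unfold lamCon lamM
  rw [hcompl]
  omega

lemma dominates_KDel : Dominates (KM M) (KDel M e) :=
  ⟨sdiff_subset, fun _ hX ↦ lamDel_le_lamM hX⟩

lemma dominates_KCon (he : e ∈ M.E) : Dominates (KM M) (KCon M e) :=
  ⟨sdiff_subset, fun _ hX ↦ lamCon_le_lamM he hX⟩

lemma lamM_inter_add_lamM_diff_inter_diff_le (he : e ∈ M.E) (hX : X ⊆ M.E \ {e})
    (hY : Y ⊆ M.E \ {e}) :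
    lamM M (X ∩ Y) + lamM M (((M.E \ {e}) \ X) ∩ ((M.E \ {e}) \ Y)) ≤
      lamDel M e X + lamCon M e Y + 1 := by
  have hXY : ((M.E \ {e}) \ X) ∩ ((M.E \ {e}) \ Y) = M.E \ (X ∪ Y ∪ {e}) := by grind
  rw [hXY, lamM_ground_diff (by grind)]
  have hsub₁ := mrank_inter_add_mrank_union_le M X (Y ∪ {e})
  have hsub₂ := mrank_inter_add_mrank_union_le M ((M.E \ {e}) \ X) ((M.E \ {e}) \ Y ∪ {e})
  rw [show X ∩ (Y ∪ {e}) = X ∩ Y by grind, ← union_assoc] at hsub₁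
  rw [show ((M.E \ {e}) \ X) ∩ ((M.E \ {e}) \ Y ∪ {e}) = M.E \ (X ∪ Y ∪ {e}) by grind,
    show ((M.E \ {e}) \ X) ∪ ((M.E \ {e}) \ Y ∪ {e}) = M.E \ (X ∩ Y) by grind] at hsub₂
  -- `r(E \ e) + r(e) ≤ r(E) + 1` pays for the normalisations of `λ_{M\e}` and `λ_{M/e}`;
  -- the last two facts only exclude truncated subtraction on the left.
  have hE := mrank_mono (M := M) (sdiff_subset : M.E \ {e} ⊆ M.E)
  have he₁ := mrank_singleton_le M e
  have hXY₁ := mrank_ground_le_mrank_add_mrank_diff M (X ∩ Y)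
  have hXY₂ := mrank_ground_le_mrank_add_mrank_diff M (X ∪ Y ∪ {e})
  unfold lamM lamDel lamCon
  omega

end Connectivity

lemma inter_union_inter_sdiff_eq {α : Type*} {S W : Set α} (B : Set α) (hW : W ⊆ S) :
    W ∩ B ∪ W ∩ (S \ B) = W := by
  grind

section Tangles

variable {α : Type*} {K K₀ : PreSys α} {k : ℕ} {T T₁ T₂ : Set (Set α)} {A W Z Z₁ Z₂ : Set α}

lemma IsTangle.diff_mem_of_notMem (hT : IsTangle K k T) (hA : A ⊆ K.E) (hlam : K.lam A < k)
    (hAT : A ∉ T) : K.E \ A ∈ T :=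
  not_not.1 fun h ↦ hAT ((hT.2.1 A hA hlam).2 h)

lemma IsTangle.mem_of_subset (hT : IsTangle K k T) (hW : W ∈ T) (hZW : Z ⊆ W)
    (hlam : K.lam Z < k) : Z ∈ T := by
  have hWE := (hT.1 W hW).1
  by_contra hZ
  have hcover : W ∪ (K.E \ Z) ∪ (K.E \ Z) = K.E := by grind
  exact hT.2.2.1 W hW _ (hT.diff_mem_of_notMem (hZW.trans hWE) hlam hZ) _
    (hT.diff_mem_of_notMem (hZW.trans hWE) hlam hZ) hcover

lemma Splits.exists_separation (h : Splits K K₀ k T) :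
    ∃ T₁ T₂ A, IsTangle K₀ k T₁ ∧ IsTangle K₀ k T₂ ∧
      InducedTangle K K₀ k T₁ = InducedTangle K K₀ k T₂ ∧ A ∈ T₁ ∧ K₀.E \ A ∈ T₂ := by
  obtain ⟨T₁, T₂, hne, h₁, h₂, hi₁, hi₂⟩ := h
  obtain ⟨A, hA⟩ : ∃ A, ¬(A ∈ T₁ ↔ A ∈ T₂) := by
    by_contra! h
    exact hne (Set.ext h)
  by_cases hA₁ : A ∈ T₁
  · obtain ⟨hAE, hlam⟩ := h₁.1 A hA₁
    exact ⟨T₁, T₂, A, h₁, h₂, hi₁.trans hi₂.symm, hA₁, h₂.diff_mem_of_notMem hAE hlam (by tauto)⟩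
  · have hA₂ : A ∈ T₂ := by tauto
    obtain ⟨hAE, hlam⟩ := h₂.1 A hA₂
    exact ⟨T₂, T₁, A, h₂, h₁, hi₂.trans hi₁.symm, hA₂, h₁.diff_mem_of_notMem hAE hlam hA₁⟩

lemma IsTangle.mem_of_inducedTangle_eq (hdom : Dominates K K₀) (h₁ : IsTangle K₀ k T₁)
    (hind : InducedTangle K K₀ k T₁ = InducedTangle K K₀ k T₂) (hW : W ∈ T₁) (hZW : Z ⊆ W)
    (hlam : K.lam Z < k) : Z ∈ T₂ := by
  have hZE : Z ⊆ K₀.E := hZW.trans (h₁.1 W hW).1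
  have hZ₁ : Z ∈ T₁ := h₁.mem_of_subset hW hZW ((hdom.2 Z hZE).trans_lt hlam)
  have hZ : Z ∈ InducedTangle K K₀ k T₁ :=
    ⟨hZE.trans hdom.1, hlam, by rwa [inter_eq_left.2 hZE]⟩
  rw [hind] at hZ
  simpa only [inter_eq_left.2 hZE] using hZ.2.2

lemma le_lam_or_le_lam_of_union_eq (hdom : Dominates K K₀) (h₁ : IsTangle K₀ k T₁)
    (h₂ : IsTangle K₀ k T₂) (hind : InducedTangle K K₀ k T₁ = InducedTangle K K₀ k T₂)
    (hW : W ∈ T₁) (hWc : K₀.E \ W ∈ T₂) (hZ : Z₁ ∪ Z₂ = W) :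
    k ≤ K.lam Z₁ ∨ k ≤ K.lam Z₂ := by
  by_contra! hlam
  have hZ₁ := h₁.mem_of_inducedTangle_eq hdom hind hW (hZ ▸ subset_union_left) hlam.1
  have hZ₂ := h₁.mem_of_inducedTangle_eq hdom hind hW (hZ ▸ subset_union_right) hlam.2
  exact h₂.2.2.1 _ hZ₁ _ hZ₂ _ hWc (by grind [(h₁.1 W hW).1])

end Tangles

/-- Any element of a matroid can be removed, by deletion or
contraction, so that no tangle of `K(M)` splits. -/
theorem stmt5 {α : Type*} (M : Matroid α) [M.Finite] (e : α) (he : e ∈ M.E) :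
    (∀ k : ℕ, ∀ T : Set (Set α), IsTangle (KM M) k T → ¬ Splits (KM M) (KDel M e) k T) ∨
    (∀ k : ℕ, ∀ T : Set (Set α), IsTangle (KM M) k T → ¬ Splits (KM M) (KCon M e) k T) := by
  by_contra! h
  obtain ⟨⟨k, _, -, hdel⟩, ⟨k', _, -, hcon⟩⟩ := h
  obtain ⟨D₁, D₂, A, hD₁, hD₂, hD, hA, hAc⟩ := hdel.exists_separation
  obtain ⟨C₁, C₂, B, hC₁, hC₂, hC, hB, hBc⟩ := hcon.exists_separation
  obtain ⟨hAE, hlamA⟩ : A ⊆ M.E \ {e} ∧ lamDel M e A < k := hD₁.1 A hA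
  obtain ⟨hBE, hlamB⟩ : B ⊆ M.E \ {e} ∧ lamCon M e B < k' := hC₁.1 B hB
  have hlamBc : lamCon M e ((M.E \ {e}) \ B) < k' := (hC₂.1 _ hBc).2
  have hopp₁ := lamM_inter_add_lamM_diff_inter_diff_le he hAE hBE
  have hopp₂ := lamM_inter_add_lamM_diff_inter_diff_le he hAE (sdiff_subset (t := B))
  rw [sdiff_sdiff_cancel_left hBE] at hopp₂
  set E₀ := M.E \ {e}
  have hdel₁ : k ≤ lamM M (A ∩ B) ∨ k ≤ lamM M (A ∩ (E₀ \ B)) :=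
    le_lam_or_le_lam_of_union_eq dominates_KDel hD₁ hD₂ hD hA hAc
      (inter_union_inter_sdiff_eq B hAE)
  have hdel₂ : k ≤ lamM M ((E₀ \ A) ∩ B) ∨ k ≤ lamM M ((E₀ \ A) ∩ (E₀ \ B)) :=
    le_lam_or_le_lam_of_union_eq dominates_KDel hD₂ hD₁ hD.symm hAc
      (by rwa [show (KDel M e).E = E₀ from rfl, sdiff_sdiff_cancel_left hAE])
      (inter_union_inter_sdiff_eq B sdiff_subset)
  have hcon₁ : k' ≤ lamM M (A ∩ B) ∨ k' ≤ lamM M ((E₀ \ A) ∩ B) :=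
    le_lam_or_le_lam_of_union_eq (dominates_KCon he) hC₁ hC₂ hC hB hBc
      (by rw [inter_comm A, inter_comm (E₀ \ A)]; exact inter_union_inter_sdiff_eq A hBE)
  have hcon₂ : k' ≤ lamM M (A ∩ (E₀ \ B)) ∨ k' ≤ lamM M ((E₀ \ A) ∩ (E₀ \ B)) :=
    le_lam_or_le_lam_of_union_eq (dominates_KCon he) hC₂ hC₁ hC.symm hBc
      (by rwa [show (KCon M e).E = E₀ from rfl, sdiff_sdiff_cancel_left hBE])
      (by rw [inter_comm A, inter_comm (E₀ \ A)]; exact inter_union_inter_sdiff_eq A sdiff_subset)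
  omega
end

section
/- Let G be a simple graph, v a vertex, and e = uv an edge incident with v. For any vertex sets A, B ⊆ V(G) \ {v}: ρ_{G−v}(A) + ρ_{(G×e)−v}(B) ≥ ρ_G(A ∩ B) + ρ_G(A ∪ B ∪ {v}) − 1. -/
open Set

variable {α : Type*} {V : Type*}

/-!
Let `M` be the GF(2) adjacency matrix of `G` and `r(X, Y)` the rank of `M[X, Y]`, so that
`ρ_{G-v}(A) = r(A, V ∖ (A ∪ {v}))`. Comparing column spaces modulo the vectors vanishing on the
rows shows that `r` is submodular:
`r(X₁ ∩ X₂, Y₁ ∪ Y₂) + r(X₁ ∪ X₂, Y₁ ∩ Y₂) ≤ r(X₁, Y₁) + r(X₂, Y₂)`.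
For `(X₁, Y₁) = (A, V ∖ (A ∪ {v}))` and `(X₂, Y₂) = (B ∪ {v}, V ∖ B)` the left side is
`ρ_G(A ∩ B) + ρ_G(A ∪ B ∪ {v})`. Finally, restricted to the rows other than `v`, the pivot on `uv`
is a row operation with a kernel of dimension at most one that kills the column `v`; hence
`r(B ∪ {v}, V ∖ B) ≤ ρ_{(G×e)-v}(B) + 1` (when `u ∉ B`, after exchanging rows and columns).
-/

open Module Submodule

theorem LinearMap.finrank_map_add_finrank_ker {K E F : Type*} [Field K] [AddCommGroup E]
    [Module K E] [FiniteDimensional K E] [AddCommGroup F] [Module K F] (f : E →ₗ[K] F)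
    (p : Submodule K E) :
    finrank K (p.map f) + finrank K (LinearMap.ker f) = finrank K ↥(p ⊔ LinearMap.ker f) := by
  have h := (f.domRestrict (p ⊔ LinearMap.ker f)).finrank_range_add_finrank_ker
  rwa [LinearMap.range_domRestrict, Submodule.map_sup, LinearMap.le_ker_iff_map.mp le_rfl,
    sup_bot_eq, LinearMap.ker_domRestrict, (comapSubtypeEquivOfLe le_sup_right).finrank_eq] at h

theorem Submodule.finrank_le_finrank_map_add_finrank_ker {K E F : Type*} [Field K]
    [AddCommGroup E] [Module K E] [FiniteDimensional K E] [AddCommGroup F] [Module K F]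
    (f : E →ₗ[K] F) (p : Submodule K E) :
    finrank K p ≤ finrank K (p.map f) + finrank K (LinearMap.ker f) :=
  (LinearMap.finrank_map_add_finrank_ker f p).symm ▸ Submodule.finrank_mono le_sup_left

section funLeft

variable {R m : Type*} [Semiring R]

theorem LinearMap.mem_ker_funLeft_val {X : Set m} {w : m → R} :
    w ∈ LinearMap.ker (LinearMap.funLeft R R ((↑) : X → m)) ↔ ∀ x ∈ X, w x = 0 := by
  simp [funext_iff]

theorem LinearMap.ker_funLeft_val_anti {X₁ X₂ : Set m} (h : X₁ ⊆ X₂) :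
    LinearMap.ker (LinearMap.funLeft R R ((↑) : X₂ → m)) ≤
      LinearMap.ker (LinearMap.funLeft R R ((↑) : X₁ → m)) := fun w hw => by
  rw [LinearMap.mem_ker_funLeft_val] at hw ⊢
  exact fun x hx => hw x (h hx)

theorem LinearMap.ker_funLeft_val_union (X₁ X₂ : Set m) :
    LinearMap.ker (LinearMap.funLeft R R ((↑) : ↥(X₁ ∪ X₂) → m)) =
      LinearMap.ker (LinearMap.funLeft R R ((↑) : X₁ → m)) ⊓
        LinearMap.ker (LinearMap.funLeft R R ((↑) : X₂ → m)) := by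
  ext w
  simp only [Submodule.mem_inf, LinearMap.mem_ker_funLeft_val, Set.mem_union]
  grind

theorem LinearMap.ker_funLeft_val_inter (X₁ X₂ : Set m) :
    LinearMap.ker (LinearMap.funLeft R R ((↑) : ↥(X₁ ∩ X₂) → m)) =
      LinearMap.ker (LinearMap.funLeft R R ((↑) : X₁ → m)) ⊔
        LinearMap.ker (LinearMap.funLeft R R ((↑) : X₂ → m)) := by
  classical
  refine le_antisymm (fun w hw => ?_) (sup_le (LinearMap.ker_funLeft_val_anti
    Set.inter_subset_left) (LinearMap.ker_funLeft_val_anti Set.inter_subset_right))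
  rw [LinearMap.mem_ker_funLeft_val] at hw
  rw [← Set.indicator_compl_add_self X₁ w]
  refine add_mem_sup ?_ ?_ <;>
    simp only [LinearMap.mem_ker_funLeft_val, Set.indicator_apply_eq_zero]
  · exact fun x hx₁ hx₁' => absurd hx₁ hx₁'
  · exact fun x hx₂ hx₁ => hw x ⟨hx₁, hx₂⟩

end funLeft

namespace Matrix

variable {K m n m' n' : Type*} [Field K]

noncomputable def submatrixRank [Finite n] (M : Matrix m n K) (X : Set m) (Y : Set n) : ℕ :=
  letI : Fintype Y := (Set.toFinite Y).fintype
  (M.submatrix ((↑) : X → m) ((↑) : Y → n)).rank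

theorem submatrixRank_transpose [Finite m] [Finite n] (M : Matrix m n K) (X : Set m)
    (Y : Set n) : submatrixRank Mᵀ Y X = submatrixRank M X Y := by
  let : Fintype X := (Set.toFinite X).fintype
  let : Fintype Y := (Set.toFinite Y).fintype
  rw [submatrixRank, submatrixRank, ← transpose_submatrix, rank_transpose]

theorem IsSymm.submatrixRank_comm [Finite m] {M : Matrix m m K} (hM : M.IsSymm)
    (X Y : Set m) : submatrixRank M X Y = submatrixRank M Y X := by
  rw [← submatrixRank_transpose, hM.eq]

theorem submatrixRank_eq_finrank_map [Finite n] (M : Matrix m n K) (X : Set m) (Y : Set n) :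
    submatrixRank M X Y =
      finrank K ((span K (M.col '' Y)).map (LinearMap.funLeft K K ((↑) : X → m))) := by
  let : Fintype Y := (Set.toFinite Y).fintype
  have hcols : Set.range (M.submatrix ((↑) : X → m) ((↑) : Y → n)).col =
      LinearMap.funLeft K K ((↑) : X → m) '' (M.col '' Y) := by
    ext w
    constructor
    · rintro ⟨y, rfl⟩
      exact ⟨M.col y, ⟨y, y.2, rfl⟩, rfl⟩
    · rintro ⟨_, ⟨y, hy, rfl⟩, rfl⟩
      exact ⟨⟨y, hy⟩, rfl⟩
  rw [submatrixRank, rank_eq_finrank_span_cols, map_span, hcols]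

theorem submatrixRank_add_finrank_ker_funLeft [Finite m] [Finite n] (M : Matrix m n K)
    (X : Set m) (Y : Set n) :
    submatrixRank M X Y + finrank K (LinearMap.ker (LinearMap.funLeft K K ((↑) : X → m))) =
      finrank K ↥(span K (M.col '' Y) ⊔ LinearMap.ker (LinearMap.funLeft K K ((↑) : X → m))) := by
  rw [submatrixRank_eq_finrank_map]
  exact LinearMap.finrank_map_add_finrank_ker _ _

theorem submatrixRank_inter_union_add_le [Finite m] [Finite n] (M : Matrix m n K)
    (X₁ X₂ : Set m) (Y₁ Y₂ : Set n) :
    submatrixRank M (X₁ ∩ X₂) (Y₁ ∪ Y₂) + submatrixRank M (X₁ ∪ X₂) (Y₁ ∩ Y₂) ≤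
      submatrixRank M X₁ Y₁ + submatrixRank M X₂ Y₂ := by
  set C : Set n → Submodule K (m → K) := fun Y => span K (M.col '' Y)
  set Z : Set m → Submodule K (m → K) := fun X =>
    LinearMap.ker (LinearMap.funLeft K K ((↑) : X → m))
  have hinter := submatrixRank_add_finrank_ker_funLeft M (X₁ ∩ X₂) (Y₁ ∪ Y₂)
  have hunion := submatrixRank_add_finrank_ker_funLeft M (X₁ ∪ X₂) (Y₁ ∩ Y₂)
  have h₁ := submatrixRank_add_finrank_ker_funLeft M X₁ Y₁
  have h₂ := submatrixRank_add_finrank_ker_funLeft M X₂ Y₂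
  rw [LinearMap.ker_funLeft_val_inter, Set.image_union, span_union, sup_sup_sup_comm] at hinter
  rw [LinearMap.ker_funLeft_val_union] at hunion
  have hle : C (Y₁ ∩ Y₂) ⊔ (Z X₁ ⊓ Z X₂) ≤ (C Y₁ ⊔ Z X₁) ⊓ (C Y₂ ⊔ Z X₂) :=
    sup_le (le_inf (le_sup_of_le_left (span_mono (Set.image_mono Set.inter_subset_left)))
        (le_sup_of_le_left (span_mono (Set.image_mono Set.inter_subset_right))))
      (inf_le_inf le_sup_right le_sup_right)
  have hmod := finrank_sup_add_finrank_inf_eq (C Y₁ ⊔ Z X₁) (C Y₂ ⊔ Z X₂)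
  have hmodZ := finrank_sup_add_finrank_inf_eq (Z X₁) (Z X₂)
  have := Submodule.finrank_mono hle
  simp only [C, Z] at *
  omega

theorem submatrixRank_le_add_finrank_ker [Finite m] [Finite n] [Finite m'] [Finite n']
    {M : Matrix m n K} {N : Matrix m' n' K} {X : Set m} {Y : Set n} {X' : Set m'} {Y' : Set n'}
    (T : (X → K) →ₗ[K] (X' → K))
    (hT : ∀ y ∈ Y, T (LinearMap.funLeft K K (↑) (M.col y)) ∈
      (span K (N.col '' Y')).map (LinearMap.funLeft K K ((↑) : X' → m'))) :
    M.submatrixRank X Y ≤ N.submatrixRank X' Y' + finrank K (LinearMap.ker T) := by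
  rw [submatrixRank_eq_finrank_map, submatrixRank_eq_finrank_map]
  refine (finrank_le_finrank_map_add_finrank_ker T _).trans
    (Nat.add_le_add_right (Submodule.finrank_mono ?_) _)
  rw [map_span, map_span, span_le]
  rintro _ ⟨_, ⟨_, ⟨y, hy, rfl⟩, rfl⟩, rfl⟩
  exact hT y hy

section pivotRowOp

variable [DecidableEq m] (M : Matrix m m K) {u : m} (v : m) {Q : Set m} (huQ : u ∈ Q)

/-- The row operations that turn `M[Q ∪ {v}, -]` into the rows `Q` of the pivot of `M` on `uv`. -/
def pivotRowOp : (↥(insert v Q) → K) →ₗ[K] (↥Q → K) :=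
  LinearMap.pi fun y => if (y : m) = u then LinearMap.proj ⟨v, Set.mem_insert v Q⟩
    else LinearMap.proj ⟨y, Set.mem_insert_of_mem v y.2⟩ -
      M v y • LinearMap.proj ⟨u, Set.mem_insert_of_mem v huQ⟩ -
      M u y • LinearMap.proj ⟨v, Set.mem_insert v Q⟩

theorem pivotRowOp_apply (w : ↥(insert v Q) → K) (y : Q) :
    pivotRowOp M v huQ w y = if (y : m) = u then w ⟨v, Set.mem_insert v Q⟩
      else w ⟨y, Set.mem_insert_of_mem v y.2⟩ - M v y * w ⟨u, Set.mem_insert_of_mem v huQ⟩ -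
        M u y * w ⟨v, Set.mem_insert v Q⟩ := by
  simp only [pivotRowOp, LinearMap.pi_apply]
  split_ifs <;> rfl

theorem finrank_ker_pivotRowOp_le_one [Finite m] :
    finrank K (LinearMap.ker (pivotRowOp M v huQ)) ≤ 1 := by
  let evalU := (LinearMap.proj (R := K) (φ := fun _ : ↥(insert v Q) => K)
    ⟨u, Set.mem_insert_of_mem v huQ⟩).domRestrict (LinearMap.ker (pivotRowOp M v huQ))
  suffices Function.Injective evalU by
    simpa using LinearMap.finrank_le_finrank_of_injective this
  refine (injective_iff_map_eq_zero _).mpr fun ⟨w, hw⟩ hwu => ?_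
  replace hwu : w ⟨u, _⟩ = 0 := hwu
  have hTw (y : Q) : pivotRowOp M v huQ w y = 0 := congrFun hw y
  have hwv : w ⟨v, Set.mem_insert v Q⟩ = 0 := by simpa [pivotRowOp_apply] using hTw ⟨u, huQ⟩
  ext ⟨z, rfl | hz⟩
  · exact hwv
  by_cases hzu : z = u
  · subst hzu
    exact hwu
  · simpa [pivotRowOp_apply, hzu, hwu, hwv] using hTw ⟨z, hz⟩

end pivotRowOp

theorem submatrixRank_insert_insert_le [Finite m] {M N : Matrix m m K} (hM : M.IsSymm) {u v : m}
    (huv : M u v = 1) (hvv : M v v = 0) {P Q : Set m} (huQ : u ∈ Q)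
    (hNu : ∀ p ∈ P, N u p = M v p)
    (hN : ∀ y ∈ Q, y ≠ u → ∀ p ∈ P, N y p = M y p - M u y * M v p - M v y * M u p) :
    M.submatrixRank (insert v Q) (insert v P) ≤ N.submatrixRank Q P + 1 := by
  classical
  refine (submatrixRank_le_add_finrank_ker (pivotRowOp M v huQ) ?_).trans
    (Nat.add_le_add_left (finrank_ker_pivotRowOp_le_one M v huQ) _)
  rintro p (hpv | hp)
  · suffices pivotRowOp M v huQ (LinearMap.funLeft K K (↑) (M.col v)) = 0 by
      rw [hpv, this]
      exact zero_mem _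
    funext ⟨y, hy⟩
    rw [pivotRowOp_apply]
    split_ifs with hyu
    · simpa using hvv
    · simp [huv, hvv, hM.apply v y]
  · refine mem_map.mpr ⟨N.col p, subset_span ⟨p, hp, rfl⟩, ?_⟩
    funext ⟨y, hy⟩
    rw [pivotRowOp_apply]
    split_ifs with hyu
    · obtain rfl : y = u := hyu
      simp [hNu p hp]
    · simp only [LinearMap.funLeft_apply, col_apply, hN y hy hyu p hp]
      ring

end Matrix

namespace SimpleGraph

variable {G : SimpleGraph V} {u v : V}

theorem adjMatrix_apply_self {α : Type*} [Zero α] [One α] [DecidableRel G.Adj] (a : V) :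
    G.adjMatrix α a a = 0 := by
  simp [adjMatrix_apply]

theorem Adj.adjMatrix_eq_one {α : Type*} [Zero α] [One α] [DecidableRel G.Adj] {a b : V}
    (h : G.Adj a b) : G.adjMatrix α a b = 1 := by
  simp [adjMatrix_apply, h]

theorem adjMatrix_localComp_apply (G : SimpleGraph V) [DecidableRel G.Adj] (w : V)
    [DecidableRel (localComp G w).Adj] {a b : V} (hab : a ≠ b) :
    (localComp G w).adjMatrix (ZMod 2) a b =
      G.adjMatrix (ZMod 2) a b + G.adjMatrix (ZMod 2) w a * G.adjMatrix (ZMod 2) w b := by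
  simp only [adjMatrix_apply]
  by_cases h₁ : G.Adj w a <;> by_cases h₂ : G.Adj w b <;> by_cases h₃ : G.Adj a b <;>
    simp [localComp, hab, h₁, h₂, h₃, CharTwo.add_self_eq_zero]

open Classical in
theorem adjMatrix_pivot_apply_left (he : G.Adj u v) {y : V} (hyu : y ≠ u) (hyv : y ≠ v) :
    (pivot G u v).adjMatrix (ZMod 2) u y = G.adjMatrix (ZMod 2) v y := by
  unfold pivot
  simp only [adjMatrix_localComp_apply, hyu.symm, hyv.symm, he.ne.symm, ne_eq,
    not_false_eq_true, adjMatrix_apply_self, he.adjMatrix_eq_one, he.symm.adjMatrix_eq_one]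
  ring_nf
  reduce_mod_char

open Classical in
theorem adjMatrix_pivot_apply (he : G.Adj u v) {x y : V} (hxu : x ≠ u) (hxv : x ≠ v)
    (hyu : y ≠ u) (hyv : y ≠ v) :
    (pivot G u v).adjMatrix (ZMod 2) x y = G.adjMatrix (ZMod 2) x y +
      G.adjMatrix (ZMod 2) u x * G.adjMatrix (ZMod 2) v y +
        G.adjMatrix (ZMod 2) v x * G.adjMatrix (ZMod 2) u y := by
  by_cases hxy : x = y
  · subst hxy
    rw [adjMatrix_apply_self, adjMatrix_apply_self]
    ring_nf
    reduce_mod_char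
  unfold pivot
  simp only [adjMatrix_localComp_apply, hxy, hyu.symm, hyv.symm, hxu.symm, hxv.symm,
    he.ne.symm, ne_eq, not_false_eq_true, adjMatrix_apply_self, he.adjMatrix_eq_one,
    he.symm.adjMatrix_eq_one]
  ring_nf
  reduce_mod_char

open Classical in
theorem cutRankOn_eq_submatrixRank [Fintype V] (S X : Set V) :
    cutRankOn G S X = (G.adjMatrix (ZMod 2)).submatrixRank (X ∩ S) (S \ X) := rfl

open Classical in
theorem cutRank_eq_submatrixRank [Fintype V] (X : Set V) :
    cutRank G X = (G.adjMatrix (ZMod 2)).submatrixRank X Xᶜ := by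
  rw [cutRank, cutRankOn_eq_submatrixRank, Set.inter_univ, ← Set.compl_eq_univ_sdiff]

open Classical in
theorem cutRankOn_compl_singleton [Fintype V] {X : Set V} (hvX : v ∉ X) :
    cutRankOn G {v}ᶜ X = (G.adjMatrix (ZMod 2)).submatrixRank X (insert v X)ᶜ := by
  rw [cutRankOn_eq_submatrixRank, Set.inter_eq_left.mpr (Set.subset_compl_singleton_iff.mpr hvX),
    Set.sdiff_eq_compl_inter, ← Set.compl_union, Set.union_comm, ← Set.insert_eq]

open Classical in
theorem submatrixRank_adjMatrix_insert_insert_le [Finite V] (he : G.Adj u v) {P Q : Set V}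
    (huQ : u ∈ Q) (huP : u ∉ P) (hvQ : v ∉ Q) (hvP : v ∉ P) :
    (G.adjMatrix (ZMod 2)).submatrixRank (insert v Q) (insert v P) ≤
      ((pivot G u v).adjMatrix (ZMod 2)).submatrixRank Q P + 1 := by
  refine Matrix.submatrixRank_insert_insert_le (isSymm_adjMatrix G) he.adjMatrix_eq_one
    (adjMatrix_apply_self v) huQ (fun p hp => ?_) (fun y hy hyu p hp => ?_)
  · exact adjMatrix_pivot_apply_left he (ne_of_mem_of_not_mem hp huP)
      (ne_of_mem_of_not_mem hp hvP)
  · rw [adjMatrix_pivot_apply he hyu (ne_of_mem_of_not_mem hy hvQ) (ne_of_mem_of_not_mem hp huP)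
      (ne_of_mem_of_not_mem hp hvP), CharTwo.sub_eq_add, CharTwo.sub_eq_add, mul_comm,
      mul_comm (G.adjMatrix (ZMod 2) v y)]

open Classical in
theorem submatrixRank_adjMatrix_insert_compl_le [Fintype V] (he : G.Adj u v) {B : Set V}
    (hvB : v ∉ B) :
    (G.adjMatrix (ZMod 2)).submatrixRank (insert v B) Bᶜ ≤
      cutRankOn (pivot G u v) {v}ᶜ B + 1 := by
  have hBc : Bᶜ = insert v (insert v B)ᶜ := by
    ext x
    rcases eq_or_ne x v with rfl | hxv <;> simp [*]
  rw [cutRankOn_compl_singleton hvB, hBc]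
  by_cases huB : u ∈ B
  · exact submatrixRank_adjMatrix_insert_insert_le he huB (by simp [huB]) hvB (by simp)
  · rw [(isSymm_adjMatrix G).submatrixRank_comm, (isSymm_adjMatrix _).submatrixRank_comm B]
    exact submatrixRank_adjMatrix_insert_insert_le he (by simp [huB, he.ne]) huB (by simp) hvB

end SimpleGraph

/-- For a simple graph `G`, a vertex `v`, an edge `e = uv` incident
with `v`, and vertex sets `A, B ⊆ V(G) \ {v}`:
`ρ_{G-v}(A) + ρ_{(G×e)-v}(B) ≥ ρ_G(A ∩ B) + ρ_G(A ∪ B ∪ {v}) - 1`. -/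
theorem stmt7 {V : Type*} [Fintype V] (G : SimpleGraph V) (u v : V) (he : G.Adj u v)
    (A B : Set V) (hA : A ⊆ {v}ᶜ) (hB : B ⊆ {v}ᶜ) :
    cutRank G (A ∩ B) + cutRank G (A ∪ B ∪ {v}) - 1 ≤
      cutRankOn G {v}ᶜ A + cutRankOn (pivot G u v) {v}ᶜ B := by
  classical
  have hvA : v ∉ A := fun h => hA h rfl
  have hvB : v ∉ B := fun h => hB h rfl
  have hsub := (G.adjMatrix (ZMod 2)).submatrixRank_inter_union_add_le A (insert v B)
    (insert v A)ᶜ Bᶜ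
  rw [Set.inter_insert_of_notMem hvA, ← Set.compl_inter, Set.insert_inter_of_notMem hvB,
    Set.union_insert, ← Set.compl_union, Set.insert_union] at hsub
  have hpivot := SimpleGraph.submatrixRank_adjMatrix_insert_compl_le he hvB
  rw [SimpleGraph.cutRank_eq_submatrixRank, SimpleGraph.cutRank_eq_submatrixRank,
    Set.union_singleton, SimpleGraph.cutRankOn_compl_singleton hvA]
  omega
end
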